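/- Let t ∈ ℝ with 0 < t < 1 and F = 2√(t/(1−t²)). On ℂ ∖ [−F,F] define g₊(z) = −((1−t)/(2√t))·Re(U_F(z))·|W_F(z)|², g₋(z) = −((1+t)/(2√t))·Im(U_F(z))·|W_F(z)|², g_w(z) = (g₊(z) − i·g₋(z))/2, g_z(z) = (g₊(z) + i·g₋(z))/2, and h₂(z) = t/2 − U_F(z)/(F·T_F(z)). Then for every φ ∈ (−π, π], at the point z₀ = a_t·cos φ + i·b_t·sin φ of ∂E_t: |2·h₂(z₀)| = |g_w(z₀)| = |g_z(z₀)| = 1, g_w(z₀) = −(e^{iφ} − t·e^{−iφ})/√(1+t²−2t·cos 2φ), and g_z(z₀) = −(e^{−iφ} − t·e^{iφ})/√(1+t²−2t·cos 2φ). -/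

import Mathlib

open scoped Classical

/-- The real segment `[−F, F]` viewed as a subset of `ℂ`. -/
def segC (F : ℝ) : Set ℂ := {z : ℂ | z.im = 0 ∧ -F ≤ z.re ∧ z.re ≤ F}

/-- `ℂ⁺`: the open right half-plane together with the nonnegative imaginary axis. -/
def Cplus : Set ℂ := {z : ℂ | 0 < z.re ∨ (z.re = 0 ∧ 0 ≤ z.im)}

/-- `U_F(z) = (z ∓ √(z²−F²))/F`, with `−` on `ℂ⁺` and `+` off `ℂ⁺`
(principal branch of the square root). -/
noncomputable def funU (F : ℝ) (z : ℂ) : ℂ :=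
  if z ∈ Cplus then (z - (z ^ 2 - (F : ℂ) ^ 2) ^ ((1 : ℂ) / 2)) / F
  else (z + (z ^ 2 - (F : ℂ) ^ 2) ^ ((1 : ℂ) / 2)) / F

/-- `T_F(z) = ±√(z²−F²)`, with `+` on `ℂ⁺` and `−` off `ℂ⁺`. -/
noncomputable def funT (F : ℝ) (z : ℂ) : ℂ :=
  if z ∈ Cplus then (z ^ 2 - (F : ℂ) ^ 2) ^ ((1 : ℂ) / 2)
  else -((z ^ 2 - (F : ℂ) ^ 2) ^ ((1 : ℂ) / 2))

/-- `W_F(z) = ((z+F)/(z−F))^{1/4} + ((z−F)/(z+F))^{1/4}` (principal fourth roots). -/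
noncomputable def funW (F : ℝ) (z : ℂ) : ℂ :=
  ((z + F) / (z - F)) ^ ((1 : ℂ) / 4) + ((z - F) / (z + F)) ^ ((1 : ℂ) / 4)

/-- The distance `F = 2√(t/(1−t²))` of the foci of the ellipse from the origin. -/
noncomputable def focF (t : ℝ) : ℝ := 2 * Real.sqrt (t / (1 - t ^ 2))

/-- The major semi-axis `a_t = √((1+t)/(1−t))`. -/
noncomputable def semiA (t : ℝ) : ℝ := Real.sqrt ((1 + t) / (1 - t))

/-- The minor semi-axis `b_t = √((1−t)/(1+t))`. -/
noncomputable def semiB (t : ℝ) : ℝ := Real.sqrt ((1 - t) / (1 + t))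

/-- The ellipse `∂E_t = {x+iy : x²/a_t² + y²/b_t² = 1}`. -/
def ellipseBd (t : ℝ) : Set ℂ :=
  {z : ℂ | z.re ^ 2 / semiA t ^ 2 + z.im ^ 2 / semiB t ^ 2 = 1}

/-- The open interior `E_t = {x+iy : x²/a_t² + y²/b_t² < 1}` of the ellipse. -/
def ellipseInt (t : ℝ) : Set ℂ :=
  {z : ℂ | z.re ^ 2 / semiA t ^ 2 + z.im ^ 2 / semiB t ^ 2 < 1}

/-- `g₊(z) = −((1−t)/(2√t))·Re(U_F(z))·|W_F(z)|²` with `F = 2√(t/(1−t²))`. -/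
noncomputable def gPlus (t : ℝ) (z : ℂ) : ℝ :=
  -((1 - t) / (2 * Real.sqrt t)) * (funU (focF t) z).re * ‖funW (focF t) z‖ ^ 2

/-- `g₋(z) = −((1+t)/(2√t))·Im(U_F(z))·|W_F(z)|²` with `F = 2√(t/(1−t²))`. -/
noncomputable def gMinus (t : ℝ) (z : ℂ) : ℝ :=
  -((1 + t) / (2 * Real.sqrt t)) * (funU (focF t) z).im * ‖funW (focF t) z‖ ^ 2

/-- `g_w(z) = (g₊(z) − i·g₋(z))/2`. -/
noncomputable def gW (t : ℝ) (z : ℂ) : ℂ :=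
  ((gPlus t z : ℝ) - Complex.I * (gMinus t z : ℝ)) / 2

/-- `g_z(z) = (g₊(z) + i·g₋(z))/2`. -/
noncomputable def gZ (t : ℝ) (z : ℂ) : ℂ :=
  ((gPlus t z : ℝ) + Complex.I * (gMinus t z : ℝ)) / 2

/-- `h₂(z) = t/2 − U_F(z)/(F·T_F(z))` with `F = 2√(t/(1−t²))`. -/
noncomputable def hTwo (t : ℝ) (z : ℂ) : ℂ :=
  (t : ℂ) / 2 - funU (focF t) z / ((focF t : ℂ) * funT (focF t) z)

/-!
Put `ζ = e^{iφ}`, `s = √t` and `u = √(1 - t²)`. Then `z₀ = (ζ + tζ⁻¹)/u` and `F = 2s/u`, so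
`z₀² - F² = S²` with `S = (ζ - tζ⁻¹)/u`. The real and imaginary parts of `z₀` and of `S` are
positive multiples of those of `ζ`, so the branch conventions give `T_F(z₀) = S` and hence
`U_F(z₀) = sζ⁻¹`. Next, `(z₀ + F)/(z₀ - F) = v²` with `v = (ζ + s)/(ζ - s)` in the right
half-plane, so `W_F(z₀) = q + q⁻¹` with `q² = v` and `|W_F(z₀)|² = |v + 1|²/|v| = 4/|ζ - tζ⁻¹|`.
All the claims then reduce to `|tζ - ζ⁻¹| = |ζ - tζ⁻¹| = √(1 + t² - 2t cos 2φ)`.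
-/

open Complex ComplexConjugate

lemma mem_Cplus_iff_of_re_im {z w : ℂ} {a b : ℝ} (ha : 0 < a) (hb : 0 < b)
    (hre : z.re = a * w.re) (him : z.im = b * w.im) : z ∈ Cplus ↔ w ∈ Cplus := by
  simp only [Cplus, Set.mem_ofPred_eq, hre, him, mul_pos_iff_of_pos_left ha,
    mul_nonneg_iff_of_pos_left hb, mul_eq_zero, ha.ne', false_or]

lemma neg_mem_Cplus_of_notMem {w : ℂ} (hw : w ∉ Cplus) : -w ∈ Cplus := by
  simp only [Cplus, Set.mem_ofPred_eq, not_or, not_and, not_le, not_lt, neg_re, neg_im] at hw ⊢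
  rcases hw.1.lt_or_eq with h | h
  · exact .inl (neg_pos.2 h)
  · exact .inr ⟨by rw [h, neg_zero], (neg_pos.2 (hw.2 h)).le⟩

lemma sq_cpow_half_of_mem_Cplus {w : ℂ} (hw : w ∈ Cplus) : (w ^ 2) ^ ((1 : ℂ) / 2) = w := by
  have h1 : -(Real.pi / 2) < w.arg := neg_pi_div_two_lt_arg_iff.2 (hw.imp id fun h => h.2)
  have h2 : w.arg ≤ Real.pi / 2 :=
    arg_le_pi_div_two_iff.2 (.inl (hw.elim le_of_lt fun h => h.1.ge))
  rw [one_div]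
  exact_mod_cast pow_cpow_ofNat_inv (n := 2) h1 h2

lemma sq_cpow_half_of_notMem_Cplus {w : ℂ} (hw : w ∉ Cplus) :
    (w ^ 2) ^ ((1 : ℂ) / 2) = -w := by
  simpa using sq_cpow_half_of_mem_Cplus (neg_mem_Cplus_of_notMem hw)

lemma funT_eq_of_sq_eq {F : ℝ} {z S : ℂ} (hS : z ^ 2 - (F : ℂ) ^ 2 = S ^ 2)
    (hC : z ∈ Cplus ↔ S ∈ Cplus) : funT F z = S := by
  by_cases hz : z ∈ Cplus
  · rw [funT, if_pos hz, hS, sq_cpow_half_of_mem_Cplus (hC.1 hz)]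
  · rw [funT, if_neg hz, hS, sq_cpow_half_of_notMem_Cplus (mt hC.2 hz), neg_neg]

lemma funU_eq_of_sq_eq {F : ℝ} {z S : ℂ} (hS : z ^ 2 - (F : ℂ) ^ 2 = S ^ 2)
    (hC : z ∈ Cplus ↔ S ∈ Cplus) : funU F z = (z - S) / F := by
  by_cases hz : z ∈ Cplus
  · rw [funU, if_pos hz, hS, sq_cpow_half_of_mem_Cplus (hC.1 hz)]
  · rw [funU, if_neg hz, hS, sq_cpow_half_of_notMem_Cplus (mt hC.2 hz), sub_eq_add_neg]

lemma arg_sq_ne_pi {v : ℂ} (hv : 0 < v.re) : (v ^ 2).arg ≠ Real.pi := by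
  rw [Ne, arg_eq_pi_iff, sq, mul_re, mul_im]
  rintro ⟨hre, him⟩
  have him0 : v.im = 0 := by nlinarith
  nlinarith

lemma sq_norm_funW_of_div_eq_sq {F : ℝ} {z v : ℂ} (hv : 0 < v.re)
    (hr : (z + F) / (z - F) = v ^ 2) : ‖funW F z‖ ^ 2 = ‖v + 1‖ ^ 2 / ‖v‖ := by
  have hv0 : v ≠ 0 := fun h => hv.ne' (by simp [h])
  set q := ((z + F) / (z - F)) ^ ((1 : ℂ) / 4) with hq
  have hq2 : q ^ 2 = v := by
    rw [hq, sq, ← cpow_add _ _ (hr ▸ pow_ne_zero 2 hv0), hr,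
      show (1 : ℂ) / 4 + 1 / 4 = 1 / 2 by norm_num]
    exact sq_cpow_half_of_mem_Cplus (.inl hv)
  have hq0 : q ≠ 0 := fun h => hv0 (by rw [← hq2, h, sq, zero_mul])
  have hW : funW F z = (q ^ 2 + 1) / q := by
    rw [funW, ← inv_div (z + F), inv_cpow _ _ (by rw [hr]; exact arg_sq_ne_pi hv), ← hq]
    field_simp
  rw [hW, hq2, norm_div, div_pow, ← norm_pow q, hq2]

lemma gZ_eq_conj_gW (t : ℝ) (z : ℂ) : gZ t z = conj (gW t z) := by
  simp only [gZ, gW, map_div₀, map_sub, map_mul, conj_ofReal, conj_I, map_ofNat]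
  ring

lemma norm_exp_sub_mul_inv_exp (t φ : ℝ) :
    ‖exp (I * φ) - t * (exp (I * φ))⁻¹‖ = √(1 + t ^ 2 - 2 * t * Real.cos (2 * φ)) := by
  have h1 : ‖exp (I * φ)‖ = 1 := by rw [mul_comm]; exact norm_exp_ofReal_mul_I φ
  rw [inv_eq_conj h1, ← Real.sqrt_sq (norm_nonneg _), Complex.sq_norm, normSq_apply]
  congr 1
  have hre : (exp (I * φ)).re = Real.cos φ := by rw [mul_comm, exp_ofReal_mul_I_re]
  have him : (exp (I * φ)).im = Real.sin φ := by rw [mul_comm, exp_ofReal_mul_I_im]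
  simp only [sub_re, sub_im, re_ofReal_mul, im_ofReal_mul, conj_re, conj_im, hre, him,
    Real.cos_two_mul]
  linear_combination (1 + t) ^ 2 * Real.sin_sq_add_cos_sq φ

noncomputable def ellipsePoint (t : ℝ) (ζ : ℂ) : ℂ := (ζ + t * ζ⁻¹) / √(1 - t ^ 2)

section EllipsePoint

variable {t : ℝ} {ζ : ℂ}

lemma focF_eq (ht : 0 ≤ t) : focF t = 2 * √t / √(1 - t ^ 2) := by
  rw [focF, Real.sqrt_div ht, mul_div_assoc]

lemma semiA_eq (h1 : -1 < t) (h2 : t < 1) : semiA t = (1 + t) / √(1 - t ^ 2) := by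
  have : 1 - t ≠ 0 := by linarith
  have : 1 - t ^ 2 ≠ 0 := by nlinarith
  rw [semiA, show (1 + t) / (1 - t) = (1 + t) ^ 2 / (1 - t ^ 2) by field_simp; ring,
    Real.sqrt_div (sq_nonneg _), Real.sqrt_sq (by linarith)]

lemma semiB_eq (h1 : -1 < t) (h2 : t < 1) : semiB t = (1 - t) / √(1 - t ^ 2) := by
  have : 1 + t ≠ 0 := by linarith
  have : 1 - t ^ 2 ≠ 0 := by nlinarith
  rw [semiB, show (1 - t) / (1 + t) = (1 - t) ^ 2 / (1 - t ^ 2) by field_simp; ring,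
    Real.sqrt_div (sq_nonneg _), Real.sqrt_sq (by linarith)]

lemma re_ellipsePoint (hζ : ‖ζ‖ = 1) :
    (ellipsePoint t ζ).re = (1 + t) / √(1 - t ^ 2) * ζ.re := by
  simp only [ellipsePoint, inv_eq_conj hζ, div_ofReal_re, add_re, re_ofReal_mul, conj_re]
  ring

lemma im_ellipsePoint (hζ : ‖ζ‖ = 1) :
    (ellipsePoint t ζ).im = (1 - t) / √(1 - t ^ 2) * ζ.im := by
  simp only [ellipsePoint, inv_eq_conj hζ, div_ofReal_im, add_im, im_ofReal_mul, conj_im]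
  ring

lemma ellipsePoint_eq (h1 : -1 < t) (h2 : t < 1) (hζ : ‖ζ‖ = 1) :
    ellipsePoint t ζ = ((semiA t * ζ.re : ℝ) : ℂ) + I * ((semiB t * ζ.im : ℝ) : ℂ) := by
  apply Complex.ext <;>
    simp [re_ellipsePoint hζ, im_ellipsePoint hζ, semiA_eq h1 h2, semiB_eq h1 h2]

lemma ellipsePoint_mem_Cplus_iff (h1 : -1 < t) (h2 : t < 1) (hζ : ‖ζ‖ = 1) :
    ellipsePoint t ζ ∈ Cplus ↔ ζ ∈ Cplus := by
  have hu : 0 < √(1 - t ^ 2) := Real.sqrt_pos.2 (by nlinarith)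
  exact mem_Cplus_iff_of_re_im (div_pos (by linarith) hu) (div_pos (by linarith) hu)
    (re_ellipsePoint hζ) (im_ellipsePoint hζ)

lemma ellipsePoint_mem_Cplus_iff_neg (h1 : -1 < t) (h2 : t < 1) (hζ : ‖ζ‖ = 1) :
    ellipsePoint t ζ ∈ Cplus ↔ ellipsePoint (-t) ζ ∈ Cplus :=
  (ellipsePoint_mem_Cplus_iff h1 h2 hζ).trans
    (ellipsePoint_mem_Cplus_iff (by linarith) (by linarith) hζ).symm

lemma ellipsePoint_sq_sub_focF_sq (h0 : 0 ≤ t) (h1 : t < 1) (hζ : ζ ≠ 0) :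
    ellipsePoint t ζ ^ 2 - (focF t : ℂ) ^ 2 = ellipsePoint (-t) ζ ^ 2 := by
  have hu : (√(1 - t ^ 2) : ℂ) ≠ 0 := ofReal_ne_zero.2 (Real.sqrt_pos.2 (by nlinarith)).ne'
  have hs : (√t : ℂ) ^ 2 = t := by rw [← ofReal_pow, Real.sq_sqrt h0]
  rw [ellipsePoint, ellipsePoint, focF_eq h0, neg_sq]
  push_cast
  field_simp
  linear_combination (-4 * ζ ^ 2) * hs

lemma funT_ellipsePoint (h0 : 0 ≤ t) (h1 : t < 1) (hζ : ‖ζ‖ = 1) :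
    funT (focF t) (ellipsePoint t ζ) = ellipsePoint (-t) ζ :=
  funT_eq_of_sq_eq (ellipsePoint_sq_sub_focF_sq h0 h1 (norm_ne_zero_iff.1 (by simp [hζ])))
    (ellipsePoint_mem_Cplus_iff_neg (by linarith) h1 hζ)

lemma funU_ellipsePoint (h0 : 0 < t) (h1 : t < 1) (hζ : ‖ζ‖ = 1) :
    funU (focF t) (ellipsePoint t ζ) = √t * ζ⁻¹ := by
  have hζ0 : ζ ≠ 0 := norm_ne_zero_iff.1 (by simp [hζ])
  rw [funU_eq_of_sq_eq (ellipsePoint_sq_sub_focF_sq h0.le h1 hζ0)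
    (ellipsePoint_mem_Cplus_iff_neg (by linarith) h1 hζ)]
  have hu : (√(1 - t ^ 2) : ℂ) ≠ 0 := ofReal_ne_zero.2 (Real.sqrt_pos.2 (by nlinarith)).ne'
  have hs : (√t : ℂ) ^ 2 = t := by rw [← ofReal_pow, Real.sq_sqrt h0.le]
  have hs0 : (√t : ℂ) ≠ 0 := ofReal_ne_zero.2 (Real.sqrt_pos.2 h0).ne'
  rw [ellipsePoint, ellipsePoint, focF_eq h0.le, neg_sq]
  push_cast
  field_simp
  linear_combination (-2 : ℂ) * hs

lemma norm_sub_mul_inv_pos (ht : |t| < 1) (hζ : ‖ζ‖ = 1) : 0 < ‖ζ - t * ζ⁻¹‖ :=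
  calc 0 < 1 - |t| := by linarith
    _ = ‖ζ‖ - ‖(t : ℂ) * ζ⁻¹‖ := by simp [hζ]
    _ ≤ ‖ζ - t * ζ⁻¹‖ := norm_sub_norm_le _ _

lemma norm_mul_sub_inv (hζ : ‖ζ‖ = 1) : ‖t * ζ - ζ⁻¹‖ = ‖ζ - t * ζ⁻¹‖ := by
  rw [← Complex.norm_conj, ← norm_neg]
  congr 1
  rw [map_sub, map_mul, conj_ofReal, map_inv₀, ← inv_eq_conj hζ, inv_inv]
  ring

lemma sq_norm_funW_ellipsePoint (h0 : 0 ≤ t) (h1 : t < 1) (hζ : ‖ζ‖ = 1) :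
    ‖funW (focF t) (ellipsePoint t ζ)‖ ^ 2 = 4 / ‖ζ - t * ζ⁻¹‖ := by
  set s : ℂ := ((√t : ℝ) : ℂ) with hs_def
  have hs : s ^ 2 = t := by rw [hs_def, ← ofReal_pow, Real.sq_sqrt h0]
  have hs1 : ‖s‖ < 1 := by
    rw [hs_def, norm_real, Real.norm_of_nonneg (Real.sqrt_nonneg _), Real.sqrt_lt' one_pos]
    linarith
  have hζ0 : ζ ≠ 0 := norm_ne_zero_iff.1 (by simp [hζ])
  have hm : ζ - s ≠ 0 := fun h => by
    rw [sub_eq_zero] at h; rw [h] at hζ; linarith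
  have hp : ζ + s ≠ 0 := fun h => by
    rw [add_eq_zero_iff_eq_neg] at h; rw [h, norm_neg] at hζ; linarith
  have hu : (√(1 - t ^ 2) : ℂ) ≠ 0 := ofReal_ne_zero.2 (Real.sqrt_pos.2 (by nlinarith)).ne'
  have hr : (ellipsePoint t ζ + focF t) / (ellipsePoint t ζ - focF t) =
      ((ζ + s) / (ζ - s)) ^ 2 := by
    have hadd : ellipsePoint t ζ + focF t = (ζ + s) ^ 2 / (√(1 - t ^ 2) * ζ) := by
      rw [ellipsePoint, focF_eq h0]; push_cast; rw [← hs_def, ← hs]; field_simp; ring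
    have hsub : ellipsePoint t ζ - focF t = (ζ - s) ^ 2 / (√(1 - t ^ 2) * ζ) := by
      rw [ellipsePoint, focF_eq h0]; push_cast; rw [← hs_def, ← hs]; field_simp; ring
    rw [hadd, hsub, div_div_div_cancel_right₀ (mul_ne_zero hu hζ0), div_pow]
  have hv : 0 < ((ζ + s) / (ζ - s)).re := by
    have hn : ζ.re ^ 2 + ζ.im ^ 2 = 1 := by
      have := Complex.sq_norm ζ
      rw [hζ, normSq_apply] at this
      linear_combination -this
    rw [div_re, ← add_div]
    refine div_pos ?_ (normSq_pos.2 hm)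
    simp only [hs_def, add_re, sub_re, add_im, sub_im, ofReal_re, ofReal_im]
    nlinarith [Real.sq_sqrt h0]
  have hv1 : (ζ + s) / (ζ - s) + 1 = 2 * ζ / (ζ - s) := by
    field_simp; ring
  have hprod : ‖ζ + s‖ * ‖ζ - s‖ = ‖ζ - t * ζ⁻¹‖ := by
    rw [← norm_mul, ← one_mul ‖ζ - _‖, ← hζ, ← norm_mul]
    congr 1
    field_simp
    linear_combination -hs
  have hpn : ‖ζ + s‖ ≠ 0 := norm_ne_zero_iff.2 hp
  have hmn : ‖ζ - s‖ ≠ 0 := norm_ne_zero_iff.2 hm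
  rw [sq_norm_funW_of_div_eq_sq hv hr, hv1, norm_div, norm_div, norm_mul, hζ, ← hprod,
    Complex.norm_two]
  field_simp
  ring

lemma gW_ellipsePoint (h0 : 0 < t) (h1 : t < 1) (hζ : ‖ζ‖ = 1) :
    gW t (ellipsePoint t ζ) = -((ζ - t * ζ⁻¹) / ‖ζ - t * ζ⁻¹‖) := by
  have hD := norm_sub_mul_inv_pos (abs_lt.2 ⟨by linarith, h1⟩) hζ
  have hs : 0 < √t := Real.sqrt_pos.2 h0
  have hP : gPlus t (ellipsePoint t ζ) = -(2 * (1 - t) * ζ.re) / ‖ζ - t * ζ⁻¹‖ := by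
    rw [gPlus, funU_ellipsePoint h0 h1 hζ, sq_norm_funW_ellipsePoint h0.le h1 hζ, inv_eq_conj hζ,
      re_ofReal_mul, conj_re]
    field_simp
    ring
  have hM : gMinus t (ellipsePoint t ζ) = 2 * (1 + t) * ζ.im / ‖ζ - t * ζ⁻¹‖ := by
    rw [gMinus, funU_ellipsePoint h0 h1 hζ, sq_norm_funW_ellipsePoint h0.le h1 hζ, inv_eq_conj hζ,
      im_ofReal_mul, conj_im]
    field_simp
    ring
  set D := ‖ζ - t * ζ⁻¹‖
  rw [gW, hP, hM]
  conv_rhs => rw [inv_eq_conj hζ, ← re_add_im ζ]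
  simp only [map_add, map_mul, conj_ofReal, conj_I]
  push_cast
  ring

lemma two_mul_hTwo_ellipsePoint (h0 : 0 < t) (h1 : t < 1) (hζ : ‖ζ‖ = 1) :
    2 * hTwo t (ellipsePoint t ζ) = (t * ζ - ζ⁻¹) / (ζ - t * ζ⁻¹) := by
  have hD := norm_sub_mul_inv_pos (abs_lt.2 ⟨by linarith, h1⟩) hζ
  have hζ0 : ζ ≠ 0 := norm_ne_zero_iff.1 (by simp [hζ])
  have hu : (√(1 - t ^ 2) : ℂ) ^ 2 = 1 - t ^ 2 := by
    rw [← ofReal_pow, Real.sq_sqrt (by nlinarith)]; push_cast; ring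
  have hu0 : (√(1 - t ^ 2) : ℂ) ≠ 0 := ofReal_ne_zero.2 (Real.sqrt_pos.2 (by nlinarith)).ne'
  have hs0 : (√t : ℂ) ≠ 0 := ofReal_ne_zero.2 (Real.sqrt_pos.2 h0).ne'
  have hD0 : ζ - t * ζ⁻¹ ≠ 0 := norm_pos_iff.1 hD
  rw [hTwo, funU_ellipsePoint h0 h1 hζ, funT_ellipsePoint h0.le h1 hζ, ellipsePoint, focF_eq h0.le]
  push_cast
  rw [neg_sq, neg_mul, ← sub_eq_add_neg]
  have hq : ζ ^ 2 - t ≠ 0 := fun h => hD0 (by field_simp; linear_combination h)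
  field_simp
  rw [hu]
  ring

end EllipsePoint

theorem stmt13_general (t : ℝ) (ht0 : 0 < t) (ht1 : t < 1) (φ : ℝ) (z₀ : ℂ)
    (hz₀ : z₀ = (semiA t * Real.cos φ : ℝ) + Complex.I * (semiB t * Real.sin φ : ℝ)) :
    ‖2 * hTwo t z₀‖ = 1 ∧
    ‖gW t z₀‖ = 1 ∧
    ‖gZ t z₀‖ = 1 ∧
    gW t z₀ = -((Complex.exp (Complex.I * φ) - (t : ℂ) * Complex.exp (-(Complex.I * φ))) /
      (Real.sqrt (1 + t ^ 2 - 2 * t * Real.cos (2 * φ)) : ℂ)) ∧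
    gZ t z₀ = -((Complex.exp (-(Complex.I * φ)) - (t : ℂ) * Complex.exp (Complex.I * φ)) /
      (Real.sqrt (1 + t ^ 2 - 2 * t * Real.cos (2 * φ)) : ℂ)) := by
  rw [exp_neg, ← norm_exp_sub_mul_inv_exp t φ]
  set ζ := exp (I * φ) with hζ_def
  have hζ' : ζ = exp (φ * I) := by rw [hζ_def, mul_comm]
  have hζ : ‖ζ‖ = 1 := by rw [hζ']; exact norm_exp_ofReal_mul_I φ
  have hz : z₀ = ellipsePoint t ζ := by
    rw [hz₀, ellipsePoint_eq (by linarith) ht1 hζ, hζ', exp_ofReal_mul_I_re, exp_ofReal_mul_I_im]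
  have hD := norm_sub_mul_inv_pos (abs_lt.2 ⟨by linarith, ht1⟩) hζ
  have hgW := gW_ellipsePoint ht0 ht1 hζ
  have hnorm : ‖gW t z₀‖ = 1 := by
    rw [hz, hgW, norm_neg, norm_div, norm_real, Real.norm_of_nonneg hD.le, div_self hD.ne']
  refine ⟨?_, hnorm, by rw [gZ_eq_conj_gW, norm_conj, hnorm], hz ▸ hgW, ?_⟩
  · rw [hz, two_mul_hTwo_ellipsePoint ht0 ht1 hζ, norm_div, norm_mul_sub_inv hζ, div_self hD.ne']
  · rw [hz, gZ_eq_conj_gW, hgW, map_neg, map_div₀, map_sub, map_mul, conj_ofReal, conj_ofReal,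
      map_inv₀, ← inv_eq_conj hζ, inv_inv]

/-- on the ellipse `∂E_t`, at `z₀ = a_t·cos φ + i·b_t·sin φ` one has
`|2h₂(z₀)| = |g_w(z₀)| = |g_z(z₀)| = 1`,
`g_w(z₀) = −(e^{iφ} − t·e^{−iφ})/√(1+t²−2t·cos 2φ)` and
`g_z(z₀) = −(e^{−iφ} − t·e^{iφ})/√(1+t²−2t·cos 2φ)`. -/
theorem stmt13 (t : ℝ) (ht0 : 0 < t) (ht1 : t < 1) (φ : ℝ)
    (hφ : φ ∈ Set.Ioc (-Real.pi) Real.pi) (z₀ : ℂ)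
    (hz₀ : z₀ = (semiA t * Real.cos φ : ℝ) + Complex.I * (semiB t * Real.sin φ : ℝ)) :
    ‖2 * hTwo t z₀‖ = 1 ∧
    ‖gW t z₀‖ = 1 ∧
    ‖gZ t z₀‖ = 1 ∧
    gW t z₀ = -((Complex.exp (Complex.I * φ) - (t : ℂ) * Complex.exp (-(Complex.I * φ))) /
      (Real.sqrt (1 + t ^ 2 - 2 * t * Real.cos (2 * φ)) : ℂ)) ∧
    gZ t z₀ = -((Complex.exp (-(Complex.I * φ)) - (t : ℂ) * Complex.exp (Complex.I * φ)) /
      (Real.sqrt (1 + t ^ 2 - 2 * t * Real.cos (2 * φ)) : ℂ)) :=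
  stmt13_general t ht0 ht1 φ z₀ hz₀
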